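/- arXiv:0906.5176 — 2 statements merged into one kernel-verified Lean document; each statement's English description precedes it below -/
import Mathlib

section
/- For every u ∈ ℝⁿ, P_Γ(u) = max_{p ∈ Π_Γ} (pᵀu + h_Γ(p)), and the maximum is attained. -/
open Filter Topology Matrix
open scoped Classical

namespace Soft

/-! Basic notions for nearest-neighbour subshifts of finite type (NNSOFT) on `ℤ^d`:
boxes, allowed colorings, color counts, the grand partition function `Z_Γ(m,u)`. -/

/-- The set of sites of the box `⟨m⟩ = [m₁] × ⋯ × [m_d]` (zero-indexed). -/
def box {d : ℕ} (m : Fin d → ℕ) : Set (Fin d → ℕ) := {x | ∀ i, x i < m i}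

/-- The site `x + e_k`. -/
def step {d : ℕ} (x : Fin d → ℕ) (k : Fin d) : Fin d → ℕ :=
  Function.update x k (x k + 1)

/-- `vol(m) = m₁ ⋯ m_d`. -/
def vol {d : ℕ} (m : Fin d → ℕ) : ℕ := ∏ i, m i

/-- `φ` satisfies all nearest-neighbour constraints imposed by `Γ` inside the box `⟨m⟩`:
whenever `x` and `x + e_k` both lie in the box, `(φ x, φ (x + e_k)) ∈ Γ k`. -/
def Allowed {d n : ℕ} (Γ : Fin d → Set (Fin n × Fin n)) (m : Fin d → ℕ)
    (φ : (Fin d → ℕ) → Fin n) : Prop :=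
  ∀ x ∈ box m, ∀ k : Fin d, step x k ∈ box m → (φ x, φ (step x k)) ∈ Γ k

/-- `φ` takes the default color `0` outside the box `⟨m⟩`; colorings of `⟨m⟩` are represented
by functions on all of `ℕ^d` normalized in this way (so that there are finitely many). -/
def Normalized {d n : ℕ} [NeZero n] (m : Fin d → ℕ) (φ : (Fin d → ℕ) → Fin n) : Prop :=
  ∀ x, x ∉ box m → φ x = 0

/-- `C_Γ(⟨m⟩)`: the set of `Γ`-allowed colorings of the box `⟨m⟩`. -/
def Col {d n : ℕ} [NeZero n] (Γ : Fin d → Set (Fin n × Fin n)) (m : Fin d → ℕ) :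
    Set ((Fin d → ℕ) → Fin n) :=
  {φ | Allowed Γ m φ ∧ Normalized m φ}

/-- `Γ`-allowed colorings of the whole lattice `ℤ^d`. -/
def AllowedZ {d n : ℕ} (Γ : Fin d → Set (Fin n × Fin n)) (φ : (Fin d → ℤ) → Fin n) : Prop :=
  ∀ (x : Fin d → ℤ) (k : Fin d), (φ x, φ (Function.update x k (x k + 1))) ∈ Γ k

/-- `c(φ)_j`: the number of sites of `⟨m⟩` colored `j` by `φ`. -/
noncomputable def cnt {d n : ℕ} (m : Fin d → ℕ) (φ : (Fin d → ℕ) → Fin n) (j : Fin n) : ℕ :=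
  Nat.card {x : Fin d → ℕ // x ∈ box m ∧ φ x = j}

/-- The weight `exp (c(φ)ᵀ u)` of a coloring `φ` of `⟨m⟩`. -/
noncomputable def weight {d n : ℕ} (m : Fin d → ℕ) (φ : (Fin d → ℕ) → Fin n)
    (u : Fin n → ℝ) : ℝ :=
  Real.exp (∑ j, (cnt m φ j : ℝ) * u j)

/-- The grand partition function `Z_Γ(m,u) = Σ_{φ ∈ C_Γ(⟨m⟩)} exp (c(φ)ᵀ u)`. -/
noncomputable def Z {d n : ℕ} [NeZero n] (Γ : Fin d → Set (Fin n × Fin n)) (m : Fin d → ℕ)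
    (u : Fin n → ℝ) : ℝ :=
  ∑' φ : Col Γ m, weight m φ.1 u

/-! Density points and the density entropy. -/

/-- `p ∈ Π_Γ`: `p` is a probability vector arising as a limiting color-frequency vector of
allowed colorings of a sequence of boxes all whose sides tend to infinity. -/
def IsDensityPoint {d n : ℕ} [NeZero n] (Γ : Fin d → Set (Fin n × Fin n))
    (p : Fin n → ℝ) : Prop :=
  (∀ i, 0 ≤ p i) ∧ (∑ i, p i) = 1 ∧
  ∃ (mq : ℕ → Fin d → ℕ) (cq : ℕ → Fin n → ℕ),
    Tendsto mq atTop atTop ∧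
    (∀ q, (∑ i, cq q i) = vol (mq q)) ∧
    (∀ q, ∃ φ ∈ Col Γ (mq q), ∀ j, cnt (mq q) φ j = cq q j) ∧
    Tendsto (fun q => fun i => (cq q i : ℝ) / (vol (mq q) : ℝ)) atTop (𝓝 p)

/-- `#C_Γ(⟨m⟩, c)`: the number of `Γ`-allowed colorings of `⟨m⟩` with color-frequency
vector `c`. -/
noncomputable def NCol {d n : ℕ} [NeZero n] (Γ : Fin d → Set (Fin n × Fin n))
    (m : Fin d → ℕ) (c : Fin n → ℕ) : ℕ :=
  Nat.card {φ : (Fin d → ℕ) → Fin n // φ ∈ Col Γ m ∧ ∀ j, cnt m φ j = c j}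

/-- The density entropy `h_Γ(p)`: the supremum, over all sequences of boxes and
color-frequency vectors converging in frequency to `p`, of the exponential growth rate
`limsup_q log #C_Γ(⟨m_q⟩,c_q) / vol(m_q)`. -/
noncomputable def densityEntropy {d n : ℕ} [NeZero n] (Γ : Fin d → Set (Fin n × Fin n))
    (p : Fin n → ℝ) : ℝ :=
  sSup {h | ∃ (mq : ℕ → Fin d → ℕ) (cq : ℕ → Fin n → ℕ),
    Tendsto mq atTop atTop ∧
    (∀ q, (∑ i, cq q i) = vol (mq q)) ∧
    (∀ q, ∃ φ ∈ Col Γ (mq q), ∀ j, cnt (mq q) φ j = cq q j) ∧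
    Tendsto (fun q => fun i => (cq q i : ℝ) / (vol (mq q) : ℝ)) atTop (𝓝 p) ∧
    h = Filter.limsup
      (fun q => Real.log (NCol Γ (mq q) (cq q)) / (vol (mq q) : ℝ)) atTop}

/-! ### Counting infrastructure -/

variable {d n : ℕ}

/-- The finset of sites of the box. -/
def boxFinset (m : Fin d → ℕ) : Finset (Fin d → ℕ) :=
  Fintype.piFinset fun i => Finset.range (m i)

lemma mem_boxFinset {m : Fin d → ℕ} {x : Fin d → ℕ} : x ∈ boxFinset m ↔ x ∈ box m := by
  simp [boxFinset, box, Fintype.mem_piFinset, Finset.mem_range]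

lemma card_boxFinset (m : Fin d → ℕ) : (boxFinset m).card = vol m := by
  simp [boxFinset, vol, Fintype.card_piFinset]

lemma box_finite (m : Fin d → ℕ) : (box m).Finite :=
  Set.Finite.ofFinset (boxFinset m) fun x => mem_boxFinset

lemma cnt_eq_card (m : Fin d → ℕ) (φ : (Fin d → ℕ) → Fin n) (j : Fin n) :
    cnt m φ j = ((boxFinset m).filter fun x => φ x = j).card := by
  have hset : {x : Fin d → ℕ | x ∈ box m ∧ φ x = j}
      = ↑((boxFinset m).filter fun x => φ x = j) := by
    ext x; simp [mem_boxFinset.symm]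
  calc Nat.card {x : Fin d → ℕ // x ∈ box m ∧ φ x = j}
      = Set.ncard {x : Fin d → ℕ | x ∈ box m ∧ φ x = j} := Nat.card_coe_set_eq _
    _ = _ := by rw [hset, Set.ncard_coe_finset]

lemma sum_cnt (m : Fin d → ℕ) (φ : (Fin d → ℕ) → Fin n) : ∑ j, cnt m φ j = vol m := by
  simp only [cnt_eq_card]
  rw [← card_boxFinset m]
  exact (Finset.card_eq_sum_card_fiberwise fun x _ => Finset.mem_univ (φ x)).symm

lemma cnt_le_vol (m : Fin d → ℕ) (φ : (Fin d → ℕ) → Fin n) (j : Fin n) :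
    cnt m φ j ≤ vol m := by
  rw [cnt_eq_card, ← card_boxFinset m]
  exact Finset.card_filter_le _ _

variable [NeZero n]

lemma col_finite (Γ : Fin d → Set (Fin n × Fin n)) (m : Fin d → ℕ) : (Col Γ m).Finite := by
  haveI : Finite ↥(box m) := (box_finite m).to_subtype
  set g : (↥(box m) → Fin n) → ((Fin d → ℕ) → Fin n) :=
    fun f x => if h : x ∈ box m then f ⟨x, h⟩ else 0 with hg
  refine Set.Finite.subset (Set.finite_range g) ?_
  rintro φ ⟨-, hnorm⟩
  refine ⟨fun x => φ x.1, ?_⟩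
  funext x
  by_cases hx : x ∈ box m
  · simp [hg, hx]
  · simp [hg, hx, hnorm x hx]

/-- `Col` as a finset. -/
noncomputable def colFinset (Γ : Fin d → Set (Fin n × Fin n)) (m : Fin d → ℕ) :
    Finset ((Fin d → ℕ) → Fin n) := (col_finite Γ m).toFinset

lemma mem_colFinset {Γ : Fin d → Set (Fin n × Fin n)} {m : Fin d → ℕ}
    {φ : (Fin d → ℕ) → Fin n} : φ ∈ colFinset Γ m ↔ φ ∈ Col Γ m :=
  Set.Finite.mem_toFinset _

lemma Z_eq_sum (Γ : Fin d → Set (Fin n × Fin n)) (m : Fin d → ℕ) (u : Fin n → ℝ) :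
    Z Γ m u = ∑ φ ∈ colFinset Γ m, weight m φ u := by
  haveI := (col_finite Γ m).fintype
  have h1 : Z Γ m u = ∑ φ : (Col Γ m : Set _), weight m (φ : (Fin d → ℕ) → Fin n) u :=
    tsum_fintype _
  rw [h1]
  exact (Finset.sum_subtype (colFinset Γ m) (fun _ => mem_colFinset) (fun φ => weight m φ u)).symm

lemma NCol_eq_card (Γ : Fin d → Set (Fin n × Fin n)) (m : Fin d → ℕ) (c : Fin n → ℕ) :
    NCol Γ m c = ((colFinset Γ m).filter fun φ => ∀ j, cnt m φ j = c j).card := by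
  have hset : {φ : (Fin d → ℕ) → Fin n | φ ∈ Col Γ m ∧ ∀ j, cnt m φ j = c j}
      = ↑((colFinset Γ m).filter fun φ => ∀ j, cnt m φ j = c j) := by
    ext φ; simp [mem_colFinset.symm]
  calc Nat.card {φ : (Fin d → ℕ) → Fin n // φ ∈ Col Γ m ∧ ∀ j, cnt m φ j = c j}
      = Set.ncard {φ : (Fin d → ℕ) → Fin n | φ ∈ Col Γ m ∧ ∀ j, cnt m φ j = c j} :=
        Nat.card_coe_set_eq _
    _ = _ := by rw [hset, Set.ncard_coe_finset]

/-- The finset of possible count vectors. -/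
def D (n : ℕ) (m : Fin d → ℕ) : Finset (Fin n → ℕ) :=
  Fintype.piFinset fun _ => Finset.range (vol m + 1)

lemma mem_D {m : Fin d → ℕ} {c : Fin n → ℕ} : c ∈ D n m ↔ ∀ j, c j ≤ vol m := by
  simp [D, Fintype.mem_piFinset, Nat.lt_succ_iff]

lemma card_D (m : Fin d → ℕ) : (D n m).card = (vol m + 1) ^ n := by
  simp [D, Fintype.card_piFinset]

variable {Γ : Fin d → Set (Fin n × Fin n)}

/-- Grouping the partition function by count vectors. -/
lemma Z_eq_group (Γ : Fin d → Set (Fin n × Fin n)) (m : Fin d → ℕ) (u : Fin n → ℝ) :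
    Z Γ m u = ∑ c ∈ D n m, (NCol Γ m c : ℝ) * Real.exp (∑ j, (c j : ℝ) * u j) := by
  rw [Z_eq_sum]
  have hmaps : ∀ φ ∈ colFinset Γ m, (fun j => cnt m φ j) ∈ D n m := by
    intro φ _
    exact mem_D.2 fun j => cnt_le_vol m φ j
  rw [← Finset.sum_fiberwise_of_maps_to hmaps (fun φ => weight m φ u)]
  refine Finset.sum_congr rfl fun c hc => ?_
  have : ∀ φ ∈ (colFinset Γ m).filter fun φ => (fun j => cnt m φ j) = c,
      weight m φ u = Real.exp (∑ j, (c j : ℝ) * u j) := by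
    intro φ hφ
    have := (Finset.mem_filter.1 hφ).2
    rw [weight]
    congr 1
    rw [← this]
  rw [Finset.sum_congr rfl this, Finset.sum_const, nsmul_eq_mul, NCol_eq_card]
  congr 2
  refine congrArg Finset.card (Finset.filter_congr fun φ _ => ?_)
  simp only [funext_iff]

lemma le_Z {m : Fin d → ℕ} {c : Fin n → ℕ} (hc : c ∈ D n m) (u : Fin n → ℝ) :
    (NCol Γ m c : ℝ) * Real.exp (∑ j, (c j : ℝ) * u j) ≤ Z Γ m u := by
  rw [Z_eq_group]
  exact Finset.single_le_sum (f := fun c => (NCol Γ m c : ℝ) * Real.exp (∑ j, (c j : ℝ) * u j))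
    (fun c _ => by positivity) hc

/-- Restriction of a coloring of `ℤ^d` gives an allowed coloring of any box. -/
lemma col_nonempty (hne : ∃ φ : (Fin d → ℤ) → Fin n, AllowedZ Γ φ) (m : Fin d → ℕ) :
    ∃ φ, φ ∈ Col Γ m := by
  obtain ⟨ψ, hψ⟩ := hne
  refine ⟨fun x => if x ∈ box m then ψ (fun i => (x i : ℤ)) else 0, ?_, ?_⟩
  · intro x hx k hxk
    simp only [if_pos hx, if_pos hxk]
    have hupd : (fun i => ((step x k) i : ℤ))
        = Function.update (fun i => (x i : ℤ)) k ((fun i => (x i : ℤ)) k + 1) := by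
      funext i
      by_cases h : i = k
      · subst h; simp [step]
      · simp [step, Function.update_apply, h]
    rw [hupd]
    exact hψ _ k
  · intro x hx; simp [hx]

lemma NCol_pos {m : Fin d → ℕ} {c : Fin n → ℕ}
    (h : ∃ φ ∈ Col Γ m, ∀ j, cnt m φ j = c j) : 0 < NCol Γ m c := by
  obtain ⟨φ, hφ, hc⟩ := h
  rw [NCol_eq_card]
  exact Finset.card_pos.2 ⟨φ, Finset.mem_filter.2 ⟨mem_colFinset.2 hφ, hc⟩⟩

lemma exists_of_NCol_pos {m : Fin d → ℕ} {c : Fin n → ℕ} (h : 0 < NCol Γ m c) :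
    ∃ φ ∈ Col Γ m, ∀ j, cnt m φ j = c j := by
  rw [NCol_eq_card] at h
  obtain ⟨φ, hφ⟩ := Finset.card_pos.1 h
  have := Finset.mem_filter.1 hφ
  exact ⟨φ, mem_colFinset.1 this.1, this.2⟩

lemma Z_pos (hne : ∃ φ : (Fin d → ℤ) → Fin n, AllowedZ Γ φ) (m : Fin d → ℕ) (u : Fin n → ℝ) :
    0 < Z Γ m u := by
  obtain ⟨φ, hφ⟩ := col_nonempty hne m
  rw [Z_eq_sum]
  refine Finset.sum_pos (fun ψ _ => Real.exp_pos _) ⟨φ, mem_colFinset.2 hφ⟩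

/-- There is a maximizing count vector. -/
lemma exists_max (m : Fin d → ℕ) (u : Fin n → ℝ) :
    ∃ c ∈ D n m, ∀ c' ∈ D n m,
      (NCol Γ m c' : ℝ) * Real.exp (∑ j, (c' j : ℝ) * u j)
        ≤ (NCol Γ m c : ℝ) * Real.exp (∑ j, (c j : ℝ) * u j) := by
  have hne : (D n m).Nonempty := ⟨fun _ => 0, mem_D.2 fun j => Nat.zero_le _⟩
  obtain ⟨c, hc, hmax⟩ := Finset.exists_max_image (D n m)
    (fun c => (NCol Γ m c : ℝ) * Real.exp (∑ j, (c j : ℝ) * u j)) hne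
  exact ⟨c, hc, hmax⟩

lemma Z_le_max {m : Fin d → ℕ} {c : Fin n → ℕ} (u : Fin n → ℝ)
    (hmax : ∀ c' ∈ D n m, (NCol Γ m c' : ℝ) * Real.exp (∑ j, (c' j : ℝ) * u j)
      ≤ (NCol Γ m c : ℝ) * Real.exp (∑ j, (c j : ℝ) * u j)) :
    Z Γ m u ≤ ((vol m + 1 : ℕ) : ℝ) ^ n *
      ((NCol Γ m c : ℝ) * Real.exp (∑ j, (c j : ℝ) * u j)) := by
  rw [Z_eq_group]
  calc ∑ c' ∈ D n m, (NCol Γ m c' : ℝ) * Real.exp (∑ j, (c' j : ℝ) * u j)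
      ≤ (D n m).card • ((NCol Γ m c : ℝ) * Real.exp (∑ j, (c j : ℝ) * u j)) :=
        Finset.sum_le_card_nsmul _ _ _ hmax
    _ = _ := by rw [card_D, nsmul_eq_mul]; push_cast; ring

lemma eventually_vol_pos {mq : ℕ → Fin d → ℕ} (hmq : Tendsto mq atTop atTop) :
    ∀ᶠ q in atTop, 0 < vol (mq q) := by
  filter_upwards [tendsto_atTop.1 hmq (fun _ => 1)] with q hq
  exact Finset.prod_pos fun i _ => hq i

lemma cq_mem_D {m : Fin d → ℕ} {c : Fin n → ℕ} (hsum : (∑ i, c i) = vol m) : c ∈ D n m :=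
  mem_D.2 fun j => hsum ▸ Finset.single_le_sum (f := c) (fun i _ => Nat.zero_le _)
    (Finset.mem_univ j)

lemma tendsto_weighted_sum {mq : ℕ → Fin d → ℕ} {cq : ℕ → Fin n → ℕ} {p : Fin n → ℝ}
    (u : Fin n → ℝ)
    (hfreq : Tendsto (fun q => fun i => (cq q i : ℝ) / (vol (mq q) : ℝ)) atTop (𝓝 p)) :
    Tendsto (fun q => (∑ j, (cq q j : ℝ) * u j) / (vol (mq q) : ℝ)) atTop
      (𝓝 (∑ j, p j * u j)) := by
  have heq : (fun q => (∑ j, (cq q j : ℝ) * u j) / (vol (mq q) : ℝ))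
      = fun q => ∑ j, ((cq q j : ℝ) / (vol (mq q) : ℝ)) * u j := by
    funext q
    rw [Finset.sum_div]
    exact Finset.sum_congr rfl fun j _ => by ring
  rw [heq]
  exact tendsto_finset_sum _ fun j _ => (tendsto_pi_nhds.1 hfreq j).mul_const (u j)

/-- Core upper bound: along any admissible sequence with frequencies converging to `p`,
the exponential growth rate of `NCol` is at most `P(u) - pᵀu`. -/
lemma limsup_le_pressure {Γ : Fin d → Set (Fin n × Fin n)} (u : Fin n → ℝ) (Pu : ℝ)
    (hPu : Tendsto (fun m : Fin d → ℕ => Real.log (Z Γ m u) / (vol m : ℝ)) atTop (𝓝 Pu))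
    {p : Fin n → ℝ} {mq : ℕ → Fin d → ℕ} {cq : ℕ → Fin n → ℕ}
    (hmq : Tendsto mq atTop atTop)
    (hsum : ∀ q, (∑ i, cq q i) = vol (mq q))
    (hwit : ∀ q, ∃ φ ∈ Col Γ (mq q), ∀ j, cnt (mq q) φ j = cq q j)
    (hfreq : Tendsto (fun q => fun i => (cq q i : ℝ) / (vol (mq q) : ℝ)) atTop (𝓝 p)) :
    Filter.limsup (fun q => Real.log (NCol Γ (mq q) (cq q)) / (vol (mq q) : ℝ)) atTop
      ≤ Pu - ∑ j, p j * u j := by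
  set f := fun q => Real.log (NCol Γ (mq q) (cq q)) / (vol (mq q) : ℝ) with hf
  set g := fun q => Real.log (Z Γ (mq q) u) / (vol (mq q) : ℝ)
    - (∑ j, (cq q j : ℝ) * u j) / (vol (mq q) : ℝ) with hgdef
  have hNCol : ∀ q, 1 ≤ NCol Γ (mq q) (cq q) := fun q => NCol_pos (hwit q)
  have hf0 : ∀ q, 0 ≤ f q := fun q =>
    div_nonneg (Real.log_nonneg (by exact_mod_cast hNCol q)) (Nat.cast_nonneg _)
  have hg : Tendsto g atTop (𝓝 (Pu - ∑ j, p j * u j)) :=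
    (hPu.comp hmq).sub (tendsto_weighted_sum u hfreq)
  have hle : ∀ᶠ q in atTop, f q ≤ g q := by
    filter_upwards [eventually_vol_pos hmq] with q hV
    have hVR : (0 : ℝ) < (vol (mq q) : ℝ) := by exact_mod_cast hV
    have hZ : (NCol Γ (mq q) (cq q) : ℝ) * Real.exp (∑ j, (cq q j : ℝ) * u j)
        ≤ Z Γ (mq q) u := le_Z (cq_mem_D (hsum q)) u
    have hNpos : (0 : ℝ) < (NCol Γ (mq q) (cq q) : ℝ) := by
      exact_mod_cast Nat.lt_of_lt_of_le Nat.zero_lt_one (hNCol q)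
    have hlog : Real.log (NCol Γ (mq q) (cq q)) + ∑ j, (cq q j : ℝ) * u j
        ≤ Real.log (Z Γ (mq q) u) := by
      have := Real.log_le_log (by positivity) hZ
      rwa [Real.log_mul (ne_of_gt hNpos) (Real.exp_ne_zero _), Real.log_exp] at this
    have : Real.log (NCol Γ (mq q) (cq q))
        ≤ Real.log (Z Γ (mq q) u) - ∑ j, (cq q j : ℝ) * u j := by linarith
    calc f q ≤ (Real.log (Z Γ (mq q) u) - ∑ j, (cq q j : ℝ) * u j) / (vol (mq q) : ℝ) := by
          show Real.log (NCol Γ (mq q) (cq q)) / (vol (mq q) : ℝ)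
            ≤ (Real.log (Z Γ (mq q) u) - ∑ j, (cq q j : ℝ) * u j) / (vol (mq q) : ℝ)
          gcongr
      _ = g q := by rw [hgdef]; ring
  rw [← hg.limsup_eq]
  exact limsup_le_limsup hle
    (isCoboundedUnder_le_of_eventually_le atTop (Eventually.of_forall hf0))
    hg.isBoundedUnder_le

lemma log_NCol_add_le {Γ : Fin d → Set (Fin n × Fin n)} {m : Fin d → ℕ} {c : Fin n → ℕ}
    (u : Fin n → ℝ) (hc : c ∈ D n m) (hpos : 0 < NCol Γ m c) :
    Real.log (NCol Γ m c) + ∑ j, (c j : ℝ) * u j ≤ Real.log (Z Γ m u) := by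
  have hZ : (NCol Γ m c : ℝ) * Real.exp (∑ j, (c j : ℝ) * u j) ≤ Z Γ m u := le_Z hc u
  have hNpos : (0 : ℝ) < (NCol Γ m c : ℝ) := by exact_mod_cast hpos
  have := Real.log_le_log (by positivity) hZ
  rwa [Real.log_mul (ne_of_gt hNpos) (Real.exp_ne_zero _), Real.log_exp] at this

lemma log_Z_le {Γ : Fin d → Set (Fin n × Fin n)} {m : Fin d → ℕ} {c : Fin n → ℕ}
    (u : Fin n → ℝ) (hZpos : 0 < Z Γ m u) (hNpos : 0 < NCol Γ m c)
    (hmax : ∀ c' ∈ D n m, (NCol Γ m c' : ℝ) * Real.exp (∑ j, (c' j : ℝ) * u j)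
      ≤ (NCol Γ m c : ℝ) * Real.exp (∑ j, (c j : ℝ) * u j)) :
    Real.log (Z Γ m u) ≤ (n : ℝ) * Real.log ((vol m : ℝ) + 1)
      + (Real.log (NCol Γ m c) + ∑ j, (c j : ℝ) * u j) := by
  have hNR : (0 : ℝ) < (NCol Γ m c : ℝ) := by exact_mod_cast hNpos
  have h1 : Z Γ m u ≤ ((vol m + 1 : ℕ) : ℝ) ^ n *
      ((NCol Γ m c : ℝ) * Real.exp (∑ j, (c j : ℝ) * u j)) := Z_le_max u hmax
  have h2 := Real.log_le_log hZpos h1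
  rw [Real.log_mul (by positivity) (by positivity),
    Real.log_mul (ne_of_gt hNR) (Real.exp_ne_zero _), Real.log_exp, Real.log_pow] at h2
  have : ((vol m + 1 : ℕ) : ℝ) = (vol m : ℝ) + 1 := by push_cast; ring
  rw [this] at h2
  linarith

lemma tendsto_log_ratio {V : ℕ → ℕ} (hV : ∀ q, q + 1 ≤ V q) :
    Tendsto (fun q => Real.log ((V q : ℝ) + 1) / (V q : ℝ)) atTop (𝓝 0) := by
  have hVtop : Tendsto V atTop atTop :=
    tendsto_atTop_mono hV (tendsto_add_atTop_nat 1)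
  have hVR : Tendsto (fun q => ((V q : ℝ) + 1)) atTop atTop :=
    tendsto_atTop_add_const_right _ 1 (tendsto_natCast_atTop_atTop.comp hVtop)
  have h0 : Tendsto (fun x : ℝ => Real.log x / x) atTop (𝓝 0) :=
    Real.isLittleO_log_id_atTop.tendsto_div_nhds_zero
  have hcomp : Tendsto (fun q => Real.log ((V q : ℝ) + 1) / ((V q : ℝ) + 1)) atTop (𝓝 0) :=
    h0.comp hVR
  have hb : ∀ q, Real.log ((V q : ℝ) + 1) / (V q : ℝ)
      ≤ 2 * (Real.log ((V q : ℝ) + 1) / ((V q : ℝ) + 1)) := by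
    intro q
    have h1n : 1 ≤ V q := le_trans (Nat.succ_le_succ (Nat.zero_le q)) (hV q)
    have h1 : (1 : ℝ) ≤ (V q : ℝ) := by exact_mod_cast h1n
    have hlog : 0 ≤ Real.log ((V q : ℝ) + 1) := Real.log_nonneg (by linarith)
    rw [mul_div_assoc', div_le_div_iff₀ (by linarith) (by linarith)]
    nlinarith
  have h0' : ∀ q, 0 ≤ Real.log ((V q : ℝ) + 1) / (V q : ℝ) := by
    intro q
    have h1 : (0 : ℝ) ≤ (V q : ℝ) := Nat.cast_nonneg _
    exact div_nonneg (Real.log_nonneg (by linarith)) h1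
  have hg : Tendsto (fun q => 2 * (Real.log ((V q : ℝ) + 1) / ((V q : ℝ) + 1))) atTop (𝓝 0) := by
    have := hcomp.const_mul (2 : ℝ)
    simpa using this
  exact squeeze_zero h0' hb hg

lemma tendsto_box_atTop {s : ℕ → ℕ} (hs : ∀ t, t ≤ s t) :
    Tendsto (fun t => fun _ : Fin d => s t + 1) atTop atTop := by
  rw [tendsto_atTop]
  intro b
  filter_upwards [eventually_ge_atTop (Finset.univ.sup b)] with t ht
  refine Pi.le_def.2 fun i => ?_
  calc b i ≤ Finset.univ.sup b := Finset.le_sup (Finset.mem_univ i)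
    _ ≤ t := ht
    _ ≤ s t := hs t
    _ ≤ s t + 1 := Nat.le_succ _

/-- For every `u ∈ ℝⁿ`, `P_Γ(u) = max_{p ∈ Π_Γ} (pᵀu + h_Γ(p))`, the
maximum being attained. -/
theorem pressure_eq_max_density
    (d n : ℕ) (hd : 0 < d) [NeZero n]
    (Γ : Fin d → Set (Fin n × Fin n))
    (hne : ∃ φ : (Fin d → ℤ) → Fin n, AllowedZ Γ φ)
    (P : (Fin n → ℝ) → ℝ)
    (hP : ∀ u, Tendsto (fun m : Fin d → ℕ =>
        Real.log (Z Γ m u) / (vol m : ℝ)) atTop (𝓝 (P u))) :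
    ∀ u : Fin n → ℝ,
      IsGreatest {r : ℝ | ∃ p : Fin n → ℝ, IsDensityPoint Γ p ∧
        r = (∑ i, p i * u i) + densityEntropy Γ p} (P u) := by
  intro u
  -- The sequence of cubes of side `q+1`.
  set M : ℕ → Fin d → ℕ := fun q _ => q + 1 with hM
  have hVge : ∀ q, q + 1 ≤ vol (M q) := by
    intro q
    have hv : vol (M q) = (q + 1) ^ d := by simp [hM, vol, Finset.prod_const]
    rw [hv]
    exact Nat.le_self_pow hd.ne' _
  have hVpos : ∀ q, 0 < vol (M q) := fun q => lt_of_lt_of_le (Nat.succ_pos q) (hVge q)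
  have hVR : ∀ q, (0 : ℝ) < (vol (M q) : ℝ) := fun q => by exact_mod_cast hVpos q
  have hMtop : Tendsto M atTop atTop := tendsto_box_atTop fun t => le_rfl
  -- Maximizing count vectors.
  choose cm hcmD hcmmax using fun q => exists_max (Γ := Γ) (M q) u
  have hNpos : ∀ q, 0 < NCol Γ (M q) (cm q) := by
    intro q
    obtain ⟨φ, hφ⟩ := col_nonempty hne (M q)
    have hwit0 : 0 < NCol Γ (M q) (fun j => cnt (M q) φ j) := NCol_pos ⟨φ, hφ, fun j => rfl⟩
    have hcD : (fun j => cnt (M q) φ j) ∈ D n (M q) := mem_D.2 fun j => cnt_le_vol _ _ _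
    have hmax := hcmmax q _ hcD
    have h0 : (0 : ℝ) < (NCol Γ (M q) (fun j => cnt (M q) φ j) : ℝ) := by exact_mod_cast hwit0
    have hprodpos : (0 : ℝ) < (NCol Γ (M q) (cm q) : ℝ)
        * Real.exp (∑ j, (cm q j : ℝ) * u j) :=
      lt_of_lt_of_le (mul_pos h0 (Real.exp_pos _)) hmax
    have hb := Real.exp_pos (∑ j, (cm q j : ℝ) * u j)
    have : (0 : ℝ) < (NCol Γ (M q) (cm q) : ℝ) := by nlinarith
    exact_mod_cast this
  have hsumc : ∀ q, (∑ i, cm q i) = vol (M q) := by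
    intro q
    obtain ⟨φ, hφ, hc⟩ := exists_of_NCol_pos (hNpos q)
    calc (∑ i, cm q i) = ∑ i, cnt (M q) φ i := Finset.sum_congr rfl fun i _ => (hc i).symm
      _ = vol (M q) := sum_cnt _ _
  -- The normalized maximal weight.
  set F : ℕ → ℝ := fun q =>
    (Real.log (NCol Γ (M q) (cm q)) + ∑ j, (cm q j : ℝ) * u j) / (vol (M q) : ℝ) with hF
  have hlow : ∀ q, F q ≤ Real.log (Z Γ (M q) u) / (vol (M q) : ℝ) := by
    intro q
    have h := log_NCol_add_le u (hcmD q) (hNpos q)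
    simp only [hF]
    gcongr
  have hupp : ∀ q, Real.log (Z Γ (M q) u) / (vol (M q) : ℝ)
      ≤ (n : ℝ) * Real.log ((vol (M q) : ℝ) + 1) / (vol (M q) : ℝ) + F q := by
    intro q
    have h := log_Z_le u (Z_pos hne (M q) u) (hNpos q) (hcmmax q)
    calc Real.log (Z Γ (M q) u) / (vol (M q) : ℝ)
        ≤ ((n : ℝ) * Real.log ((vol (M q) : ℝ) + 1)
          + (Real.log (NCol Γ (M q) (cm q)) + ∑ j, (cm q j : ℝ) * u j)) / (vol (M q) : ℝ) := by
          gcongr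
      _ = _ := add_div _ _ _
  have hZlim : Tendsto (fun q => Real.log (Z Γ (M q) u) / (vol (M q) : ℝ)) atTop (𝓝 (P u)) :=
    (hP u).comp hMtop
  have heps : Tendsto (fun q => (n : ℝ) * Real.log ((vol (M q) : ℝ) + 1) / (vol (M q) : ℝ))
      atTop (𝓝 0) := by
    have h := (tendsto_log_ratio hVge).const_mul (n : ℝ)
    simpa [mul_div_assoc] using h
  have hFlim : Tendsto F atTop (𝓝 (P u)) := by
    have h1 : Tendsto (fun q => Real.log (Z Γ (M q) u) / (vol (M q) : ℝ)
        - (n : ℝ) * Real.log ((vol (M q) : ℝ) + 1) / (vol (M q) : ℝ)) atTop (𝓝 (P u)) := by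
      have := hZlim.sub heps
      simpa using this
    exact tendsto_of_tendsto_of_tendsto_of_le_of_le h1 hZlim
      (fun q => by linarith [hupp q]) hlow
  -- Frequencies and a convergent subsequence.
  have hπmem : ∀ q, (fun j => (cm q j : ℝ) / (vol (M q) : ℝ)) ∈ Set.Icc (0 : Fin n → ℝ) 1 := by
    intro q
    refine Set.mem_Icc.2 ⟨Pi.le_def.2 fun j => ?_, Pi.le_def.2 fun j => ?_⟩
    · exact div_nonneg (Nat.cast_nonneg _) (Nat.cast_nonneg _)
    · have h1 : cm q j ≤ vol (M q) := mem_D.1 (hcmD q) j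
      show (cm q j : ℝ) / (vol (M q) : ℝ) ≤ 1
      rw [div_le_one (hVR q)]
      exact_mod_cast h1
  obtain ⟨p, hpmem, s, hsmono, hπs⟩ :=
    (isCompact_Icc (a := (0 : Fin n → ℝ)) (b := 1)).tendsto_subseq hπmem
  -- The subsequence data witnesses that `p` is a density point.
  have hmq2 : Tendsto (fun t => M (s t)) atTop atTop := hMtop.comp hsmono.tendsto_atTop
  have hsum2 : ∀ t, (∑ i, cm (s t) i) = vol (M (s t)) := fun t => hsumc (s t)
  have hwit2 : ∀ t, ∃ φ ∈ Col Γ (M (s t)), ∀ j, cnt (M (s t)) φ j = cm (s t) j :=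
    fun t => exists_of_NCol_pos (hNpos (s t))
  have hfreq2 : Tendsto (fun t => fun i => (cm (s t) i : ℝ) / (vol (M (s t)) : ℝ))
      atTop (𝓝 p) := hπs
  have hp0 : ∀ i, 0 ≤ p i := fun i => hpmem.1 i
  have hsum1 : (∑ j, p j) = 1 := by
    have h1 : Tendsto (fun t => ∑ j, (cm (s t) j : ℝ) / (vol (M (s t)) : ℝ))
        atTop (𝓝 (∑ j, p j)) :=
      tendsto_finset_sum _ fun j _ => tendsto_pi_nhds.1 hfreq2 j
    have h2 : (fun t => ∑ j, (cm (s t) j : ℝ) / (vol (M (s t)) : ℝ)) = fun _ => (1 : ℝ) := by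
      funext t
      rw [← Finset.sum_div, div_eq_one_iff_eq (ne_of_gt (hVR (s t)))]
      exact_mod_cast hsum2 t
    rw [h2] at h1
    exact (tendsto_nhds_unique h1 tendsto_const_nhds)
  -- The limsup along the subsequence is exactly `P u - pᵀu`.
  have hwu : Tendsto (fun t => (∑ j, (cm (s t) j : ℝ) * u j) / (vol (M (s t)) : ℝ))
      atTop (𝓝 (∑ j, p j * u j)) := tendsto_weighted_sum u hfreq2
  have hNlim : Tendsto
      (fun t => Real.log (NCol Γ (M (s t)) (cm (s t))) / (vol (M (s t)) : ℝ))
      atTop (𝓝 (P u - ∑ j, p j * u j)) := by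
    have heq : (fun t => Real.log (NCol Γ (M (s t)) (cm (s t))) / (vol (M (s t)) : ℝ))
        = fun t => F (s t) - (∑ j, (cm (s t) j : ℝ) * u j) / (vol (M (s t)) : ℝ) := by
      funext t
      simp only [hF]
      rw [add_div]
      ring
    rw [heq]
    exact (hFlim.comp hsmono.tendsto_atTop).sub hwu
  have hlimsup : Filter.limsup
      (fun t => Real.log (NCol Γ (M (s t)) (cm (s t))) / (vol (M (s t)) : ℝ)) atTop
      = P u - ∑ j, p j * u j := hNlim.limsup_eq
  have hD : densityEntropy Γ p = P u - ∑ j, p j * u j := by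
    apply le_antisymm
    · rw [densityEntropy]
      apply csSup_le
      · exact ⟨_, fun t => M (s t), fun t => cm (s t), hmq2, hsum2, hwit2, hfreq2, hlimsup.symm⟩
      · rintro h' ⟨mq', cq', a1, a2, a3, a4, rfl⟩
        exact limsup_le_pressure u (P u) (hP u) a1 a2 a3 a4
    · rw [densityEntropy]
      apply le_csSup
      · refine ⟨P u - ∑ j, p j * u j, ?_⟩
        rintro h' ⟨mq', cq', a1, a2, a3, a4, rfl⟩
        exact limsup_le_pressure u (P u) (hP u) a1 a2 a3 a4
      · exact ⟨fun t => M (s t), fun t => cm (s t), hmq2, hsum2, hwit2, hfreq2, hlimsup.symm⟩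
  constructor
  · exact ⟨p, ⟨hp0, hsum1, fun t => M (s t), fun t => cm (s t), hmq2, hsum2, hwit2, hfreq2⟩,
      by rw [hD]; ring⟩
  · rintro r ⟨p', ⟨hp'0, hp'1, mq', cq', a1, a2, a3, a4⟩, rfl⟩
    have hD' : densityEntropy Γ p' ≤ P u - ∑ j, p' j * u j := by
      rw [densityEntropy]
      apply csSup_le
      · exact ⟨_, mq', cq', a1, a2, a3, a4, rfl⟩
      · rintro h' ⟨mq'', cq'', b1, b2, b3, b4, rfl⟩
        exact limsup_le_pressure u (P u) (hP u) b1 b2 b3 b4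
    linarith

end Soft
end

section
/- Let Π_Γ(ℝⁿ) = ⋃_{u ∈ ℝⁿ} π(u), where π(u) = {p ∈ Π_Γ : P_Γ(u) = pᵀu + h_Γ(p)}. Then the density entropy h_Γ is a concave function on every convex subset of Π_Γ(ℝⁿ). -/
open Filter Topology Matrix
open scoped Classical

namespace Soft

/-- `π(u) = {p ∈ Π_Γ : P_Γ(u) = pᵀu + h_Γ(p)}`. -/
def piSet {d n : ℕ} [NeZero n] (Γ : Fin d → Set (Fin n × Fin n))
    (P : (Fin n → ℝ) → ℝ) (u : Fin n → ℝ) : Set (Fin n → ℝ) :=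
  {p | IsDensityPoint Γ p ∧ P u = (∑ i, p i * u i) + densityEntropy Γ p}

/-! The inequality `h_Γ(p) ≤ P_Γ(w) - pᵀw`, valid for every density point `p` and every `w`, says
that `h_Γ` lies below each of the affine functions `p ↦ P_Γ(w) - pᵀw`; on `Π_Γ(ℝⁿ)` it touches
one of them at every point, and a function lying below a family of concave functions and
touching one of them at every point is concave. The inequality itself comes from the single-term bound
`#C_Γ(⟨m⟩,c) · exp(cᵀw) ≤ Z_Γ(m,w)`, after taking logarithms, dividing by `vol(m)` and passing
to the limit along the boxes. -/

theorem concaveOn_of_forall_le_of_exists_eq {𝕜 E β ι : Type*} [Semiring 𝕜] [PartialOrder 𝕜]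
    [AddCommMonoid E] [SMul 𝕜 E] [AddCommMonoid β] [PartialOrder β] [IsOrderedAddMonoid β]
    [SMul 𝕜 β] [PosSMulMono 𝕜 β] {s : Set E} {f : E → β} {g : ι → E → β}
    (hs : Convex 𝕜 s) (hg : ∀ i, ConcaveOn 𝕜 s (g i)) (hle : ∀ i, ∀ x ∈ s, f x ≤ g i x)
    (heq : ∀ x ∈ s, ∃ i, f x = g i x) : ConcaveOn 𝕜 s f := by
  refine ⟨hs, fun x hx y hy a b ha hb hab => ?_⟩
  obtain ⟨i, hi⟩ := heq _ (hs hx hy ha hb hab)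
  calc a • f x + b • f y ≤ a • g i x + b • g i y := by
        gcongr
        exacts [hle i x hx, hle i y hy]
    _ ≤ g i (a • x + b • y) := (hg i).2 hx hy ha hb hab
    _ = f (a • x + b • y) := hi.symm

section Counting

variable {d n : ℕ} [NeZero n] (Γ : Fin d → Set (Fin n × Fin n)) (m : Fin d → ℕ)

theorem finite_box : (box m).Finite :=
  (Set.Finite.pi fun i => Set.finite_Iio (m i)).subset fun _ hx i _ => hx i

theorem finite_col : (Col Γ m).Finite := by
  have : Finite (box m) := (finite_box m).to_subtype
  refine Set.Finite.of_finite_image (f := fun φ (x : box m) => φ x) (Set.toFinite _) ?_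
  intro φ hφ ψ hψ h
  funext x
  by_cases hx : x ∈ box m
  · exact congrFun h ⟨x, hx⟩
  · rw [hφ.2 x hx, hψ.2 x hx]

theorem finite_fiber (c : Fin n → ℕ) : Finite {φ // φ ∈ Col Γ m ∧ ∀ j, cnt m φ j = c j} :=
  ((finite_col Γ m).subset fun _ h => h.1).to_subtype

theorem NCol_mul_exp_le_Z (c : Fin n → ℕ) (w : Fin n → ℝ) :
    (NCol Γ m c : ℝ) * Real.exp (∑ j, (c j : ℝ) * w j) ≤ Z Γ m w := by
  have : Finite (Col Γ m) := (finite_col Γ m).to_subtype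
  have := finite_fiber Γ m c
  let F := {φ // φ ∈ Col Γ m ∧ ∀ j, cnt m φ j = c j}
  have hweight (φ : F) : weight m φ.1 w = Real.exp (∑ j, (c j : ℝ) * w j) := by
    simp only [weight, φ.2.2]
  calc (NCol Γ m c : ℝ) * Real.exp (∑ j, (c j : ℝ) * w j)
      = ∑' φ : F, weight m φ.1 w := by
        rw [tsum_congr hweight, tsum_const, nsmul_eq_mul, NCol]
    _ ≤ Z Γ m w :=
        Summable.of_finite.tsum_le_tsum_of_inj (fun φ : F => (⟨φ.1, φ.2.1⟩ : Col Γ m))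
          (fun _ _ h => Subtype.ext (Subtype.mk.inj h))
          (fun _ _ => (Real.exp_pos _).le) (fun _ => le_rfl) Summable.of_finite

variable {Γ m}

theorem one_le_NCol {c : Fin n → ℕ} (h : ∃ φ ∈ Col Γ m, ∀ j, cnt m φ j = c j) :
    1 ≤ NCol Γ m c := by
  obtain ⟨φ, hφ, hc⟩ := h
  have := finite_fiber Γ m c
  have : Nonempty {φ // φ ∈ Col Γ m ∧ ∀ j, cnt m φ j = c j} := ⟨⟨φ, hφ, hc⟩⟩
  exact Nat.card_pos

theorem log_NCol_div_vol_le {c : Fin n → ℕ} (hN : 1 ≤ NCol Γ m c) (w : Fin n → ℝ) :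
    Real.log (NCol Γ m c) / vol m
      ≤ Real.log (Z Γ m w) / vol m - ∑ j, ((c j : ℝ) / vol m) * w j := by
  have hNpos : (0 : ℝ) < NCol Γ m c := by exact_mod_cast hN
  have hlog : Real.log (NCol Γ m c) + ∑ j, (c j : ℝ) * w j ≤ Real.log (Z Γ m w) := by
    rw [← Real.log_exp (∑ j, (c j : ℝ) * w j), ← Real.log_mul hNpos.ne' (Real.exp_pos _).ne']
    exact Real.log_le_log (by positivity) (NCol_mul_exp_le_Z Γ m c w)
  have hsum : ∑ j, ((c j : ℝ) / vol m) * w j = (∑ j, (c j : ℝ) * w j) / vol m := by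
    rw [Finset.sum_div]
    exact Finset.sum_congr rfl fun j _ => div_mul_eq_mul_div _ _ _
  rw [hsum, le_sub_iff_add_le, ← add_div]
  exact div_le_div_of_nonneg_right hlog (Nat.cast_nonneg _)

end Counting

section Entropy

variable {d n : ℕ} [NeZero n] {Γ : Fin d → Set (Fin n × Fin n)} {w : Fin n → ℝ} {L : ℝ}

theorem limsup_log_NCol_div_vol_le
    (hZ : Tendsto (fun m : Fin d → ℕ => Real.log (Z Γ m w) / vol m) atTop (𝓝 L))
    {mq : ℕ → Fin d → ℕ} {cq : ℕ → Fin n → ℕ} {p : Fin n → ℝ} (hm : Tendsto mq atTop atTop)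
    (hc : ∀ q, ∃ φ ∈ Col Γ (mq q), ∀ j, cnt (mq q) φ j = cq q j)
    (hp : Tendsto (fun q i => (cq q i : ℝ) / vol (mq q)) atTop (𝓝 p)) :
    limsup (fun q => Real.log (NCol Γ (mq q) (cq q)) / vol (mq q)) atTop
      ≤ L - ∑ i, p i * w i := by
  have hbound : Tendsto (fun q => Real.log (Z Γ (mq q) w) / vol (mq q)
      - ∑ j, ((cq q j : ℝ) / vol (mq q)) * w j) atTop (𝓝 (L - ∑ i, p i * w i)) :=
    (hZ.comp hm).sub <| tendsto_finsetSum _ fun j _ =>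
      (tendsto_pi_nhds.mp hp j).mul_const (w j)
  have hcobdd : IsCoboundedUnder (· ≤ ·) atTop
      (fun q => Real.log (NCol Γ (mq q) (cq q)) / vol (mq q)) := by
    refine isCoboundedUnder_le_of_eventually_le atTop (x := 0) ?_
    filter_upwards with q
    have : (0 : ℝ) ≤ Real.log (NCol Γ (mq q) (cq q)) :=
      Real.log_nonneg (by exact_mod_cast one_le_NCol (hc q))
    positivity
  rw [← hbound.limsup_eq]
  refine limsup_le_limsup ?_ hcobdd hbound.isBoundedUnder_le
  exact Eventually.of_forall fun q => log_NCol_div_vol_le (one_le_NCol (hc q)) w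

theorem densityEntropy_le
    (hZ : Tendsto (fun m : Fin d → ℕ => Real.log (Z Γ m w) / vol m) atTop (𝓝 L))
    {p : Fin n → ℝ} (hp : IsDensityPoint Γ p) :
    densityEntropy Γ p ≤ L - ∑ i, p i * w i := by
  obtain ⟨-, -, mq, cq, hm, hvol, hc, hfreq⟩ := hp
  refine csSup_le ⟨_, mq, cq, hm, hvol, hc, hfreq, rfl⟩ ?_
  rintro _ ⟨mq, cq, hm, -, hc, hfreq, rfl⟩
  exact limsup_log_NCol_div_vol_le hZ hm hc hfreq

end Entropy

theorem densityEntropy_concave_on_convex_subsets_general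
    (d n : ℕ) [NeZero n]
    (Γ : Fin d → Set (Fin n × Fin n))
    (P : (Fin n → ℝ) → ℝ)
    (hP : ∀ u, Tendsto (fun m : Fin d → ℕ =>
        Real.log (Z Γ m u) / (vol m : ℝ)) atTop (𝓝 (P u))) :
    ∀ A : Set (Fin n → ℝ), A ⊆ (⋃ u : Fin n → ℝ, piSet Γ P u) → Convex ℝ A →
      ConcaveOn ℝ A (densityEntropy Γ) := by
  intro A hA hconv
  have hdensity (p) (hp : p ∈ A) : IsDensityPoint Γ p := by
    obtain ⟨w, hw⟩ := Set.mem_iUnion.mp (hA hp)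
    exact hw.1
  refine concaveOn_of_forall_le_of_exists_eq (g := fun w p => P w - ∑ i, p i * w i) hconv
    (fun w => (concaveOn_const _ hconv).sub (((dotProductBilin ℝ ℝ).flip w).convexOn hconv))
    (fun w p hp => densityEntropy_le (hP w) (hdensity p hp)) fun p hp => ?_
  obtain ⟨w, -, hw⟩ := Set.mem_iUnion.mp (hA hp)
  exact ⟨w, by linarith⟩

/-- With `Π_Γ(ℝⁿ) = ⋃_u π(u)`, the density entropy `h_Γ` is a concave
function on every convex subset of `Π_Γ(ℝⁿ)`. -/
theorem densityEntropy_concave_on_convex_subsets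
    (d n : ℕ) (hd : 0 < d) [NeZero n]
    (Γ : Fin d → Set (Fin n × Fin n))
    (hne : ∃ φ : (Fin d → ℤ) → Fin n, AllowedZ Γ φ)
    (P : (Fin n → ℝ) → ℝ)
    (hP : ∀ u, Tendsto (fun m : Fin d → ℕ =>
        Real.log (Z Γ m u) / (vol m : ℝ)) atTop (𝓝 (P u))) :
    ∀ A : Set (Fin n → ℝ), A ⊆ (⋃ u : Fin n → ℝ, piSet Γ P u) → Convex ℝ A →
      ConcaveOn ℝ A (densityEntropy Γ) :=
  densityEntropy_concave_on_convex_subsets_general d n Γ P hP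

end Soft
end
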